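/- Suppose the commutator equation ad(A^D; Ψ) + A^{NR} = 0 holds, where A^{NR} is the non-resonant part of A with A^{NR} of order γ and Ψ of order γ − δ with δ > γ. Then for all k ≥ 2, ⦀ad^k(A^D; Ψ)⦀_l^{(β+γ−δ)} ≤ ((2/s) ⦀A^{NR}⦀_{l+|β|+|γ−δ|}^{(γ)})^{k−1} · ⦀A^{NR}⦀_{l+|γ−δ|}^{(β)}, given that ⦀Ψ⦀_l^{(γ−δ)} ≤ (1/s) ⦀A^{NR}⦀_l^{(γ)} for all l ≥ 0. -/

import Mathlib

noncomputable section

open scoped Classical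

variable {G Ξ : Type*}

/-- The symbol norm `⦀b⦀_l^{(γ)} = Σ_θ ⟨θ⟩^l sup_ξ ⟨ξ⟩^{−γ} |b_θ(ξ)|`. -/
def snorm (w : Ξ → ℝ) (wG : G → ℝ) (b : G → Ξ → ℂ) (γ l : ℝ) : ℝ :=
  ∑' θ : G, wG θ ^ l * ⨆ ξ : Ξ, w ξ ^ (-γ) * ‖b θ ξ‖

/-- `b` is a symbol of order `γ`: all symbol norms `⦀b⦀_l^{(γ)}`, `l ≥ 0`, are finite. -/
def HasOrder (w : Ξ → ℝ) (wG : G → ℝ) (b : G → Ξ → ℂ) (γ : ℝ) : Prop :=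
  (∀ θ : G, BddAbove (Set.range fun ξ : Ξ => w ξ ^ (-γ) * ‖b θ ξ‖)) ∧
    ∀ l : ℝ, 0 ≤ l → Summable fun θ : G => wG θ ^ l * ⨆ ξ : Ξ, w ξ ^ (-γ) * ‖b θ ξ‖

/-- An almost periodic symbol with (countable, symmetric, unital) frequency set `Θ`. -/
def IsAPSymbol [Group G] (b : G → Ξ → ℂ) (Θ : Set G) : Prop :=
  Θ.Countable ∧ (1 : G) ∈ Θ ∧ (∀ θ ∈ Θ, θ⁻¹ ∈ Θ) ∧ ∀ g ∉ Θ, ∀ ξ : Ξ, b g ξ = 0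

/-- The action of the almost periodic operator `Op(b)`, `B e_ξ = Σ_θ b_θ(ξ) e_{θ▷ξ}`,
on a vector `x`, written out in coordinates. -/
def opApply [Group G] [MulAction G Ξ] (b : G → Ξ → ℂ) (x : Ξ → ℂ) : Ξ → ℂ :=
  fun η => ∑' θ : G, b θ (θ⁻¹ • η) * x (θ⁻¹ • η)

/-- The composed symbol `(a∘b)_θ(ξ) = Σ_{θ_a θ_b = θ} a_{θ_a}(θ_b ▷ ξ) b_{θ_b}(ξ)`. -/
def compSymb [Group G] [MulAction G Ξ] (a b : G → Ξ → ℂ) : G → Ξ → ℂ :=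
  fun θ ξ => ∑' h : G, a (θ * h⁻¹) (h • ξ) * b h ξ

/-- The commutator symbol `ad(A,B) = i(AB − BA)`. -/
def adSymb [Group G] [MulAction G Ξ] (a b : G → Ξ → ℂ) : G → Ξ → ℂ :=
  fun θ ξ => Complex.I * (compSymb a b θ ξ - compSymb b a θ ξ)

/-!
The weight `⟨θ⟩ = 1 + sup_ξ |⟨θ ▷ ξ⟩ - ⟨ξ⟩|` is submultiplicative and satisfies Peetre's
inequality `⟨ξ⟩^κ ≤ ⟨θ ▷ ξ⟩^κ ⟨θ⟩^{|κ|}`. Estimating the composition series term by term and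
summing the resulting convolution over `G` gives
`⦀a ∘ b⦀_l^{(κa+κb)} ≤ ⦀a⦀_l^{(κa)} ⦀b⦀_{l+|κa|}^{(κb)}`, hence a commutator estimate.
The commutator equation turns `ad(A^D; Ψ)` into `-A^{NR}`, and every further commutator with
`Ψ` costs at most the factor `(2/s) ⦀A^{NR}⦀^{(γ)}`. For this to iterate without shifting the
index `l` of the previous commutator, `Ψ` is used as a symbol of order `0` (possible as
`γ < δ`) in the product `Ψ ∘ X`.
-/

lemma le_mul_of_abs_sub_le {a b c : ℝ} (hb : 1 ≤ b) (hc : 1 ≤ c) (h : |a - b| ≤ c - 1) :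
    a ≤ b * c := by
  nlinarith [(abs_le.mp h).2, mul_nonneg (sub_nonneg.2 hb) (sub_nonneg.2 hc)]

lemma rpow_le_rpow_mul_rpow_abs {x y c : ℝ} (κ : ℝ) (hx : 0 < x) (hy : 0 < y) (hc : 1 ≤ c)
    (h₁ : x ≤ y * c) (h₂ : y ≤ x * c) : x ^ κ ≤ y ^ κ * c ^ |κ| := by
  have hc₀ : 0 ≤ c := by linarith
  rcases le_total 0 κ with hκ | hκ
  · rw [abs_of_nonneg hκ, ← Real.mul_rpow hy.le hc₀]
    exact Real.rpow_le_rpow hx.le h₁ hκ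
  · have h : x ^ κ * c ^ κ ≤ y ^ κ := by
      rw [← Real.mul_rpow hx.le hc₀]
      exact Real.rpow_le_rpow_of_nonpos hy h₂ hκ
    rw [abs_of_nonpos hκ]
    calc x ^ κ = x ^ κ * c ^ κ * c ^ (-κ) := by
          rw [mul_assoc, ← Real.rpow_add (by linarith), add_neg_cancel, Real.rpow_zero, mul_one]
      _ ≤ y ^ κ * c ^ (-κ) := mul_le_mul_of_nonneg_right h (Real.rpow_nonneg hc₀ _)

lemma hasSum_tsum_mul_inv_mul [Group G] {f g : G → ℝ} (hf : Summable f) (hg : Summable g)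
    (hf₀ : 0 ≤ f) (hg₀ : 0 ≤ g) :
    HasSum (fun θ => ∑' h, f (θ * h⁻¹) * g h) ((∑' x, f x) * ∑' y, g y) := by
  let e : G × G ≃ G × G :=
    ⟨fun p => (p.1 * p.2⁻¹, p.2), fun p => (p.1 * p.2, p.2), fun p => by simp, fun p => by simp⟩
  have hprod : HasSum (fun p : G × G => f p.1 * g p.2) ((∑' x, f x) * ∑' y, g y) :=
    hf.hasSum.mul hg.hasSum (hf.mul_of_nonneg hg hf₀ hg₀)
  have hshear := e.hasSum_iff.2 hprod
  exact hshear.prod_fiberwise fun θ => (hshear.summable.prod_factor θ).hasSum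

lemma summable_mul_inv_mul [Group G] {f g : G → ℝ} (hf : Summable f) (hg : Summable g)
    (hf₀ : 0 ≤ f) (hg₀ : 0 ≤ g) (θ : G) : Summable fun h => f (θ * h⁻¹) * g h :=
  (hg.mul_left (∑' x, f x)).of_nonneg_of_le (fun h => mul_nonneg (hf₀ _) (hg₀ h))
    fun h => mul_le_mul_of_nonneg_right (hf.le_tsum _ fun x _ => hf₀ x) (hg₀ h)

/-- Weights `w = ⟨ξ⟩` on frequencies and `wG = ⟨θ⟩` on the group; `rpow_le` is the
Peetre-type inequality `⟨ξ⟩^κ ≤ ⟨θ ▷ ξ⟩^κ ⟨θ⟩^{|κ|}`. -/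
structure SymbolWeights [Mul G] [SMul G Ξ] (w : Ξ → ℝ) (wG : G → ℝ) : Prop where
  one_le : ∀ ξ, 1 ≤ w ξ
  one_le_group : ∀ g, 1 ≤ wG g
  map_mul_le : ∀ g h : G, wG (g * h) ≤ wG g * wG h
  rpow_le : ∀ (g : G) (ξ : Ξ) (κ : ℝ), w ξ ^ κ ≤ w (g • ξ) ^ κ * wG g ^ |κ|

lemma symbolWeights_of_eq_one_add_iSup [Group G] [MulAction G Ξ] {w : Ξ → ℝ} {wG : G → ℝ}
    (hw : ∀ ξ, 1 ≤ w ξ) (hwG : ∀ g : G, wG g = 1 + ⨆ ξ : Ξ, |w (g • ξ) - w ξ|)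
    (hbdd : ∀ g : G, BddAbove (Set.range fun ξ : Ξ => |w (g • ξ) - w ξ|)) :
    SymbolWeights w wG := by
  have habs : ∀ (g : G) ξ, |w (g • ξ) - w ξ| ≤ wG g - 1 := fun g ξ => by
    rw [hwG]; linarith [le_ciSup (hbdd g) ξ]
  have hone : ∀ g, 1 ≤ wG g := fun g => by
    rw [hwG]; linarith [Real.iSup_nonneg fun ξ => abs_nonneg (w (g • ξ) - w ξ)]
  refine ⟨hw, hone, fun g h => ?_, fun g ξ κ => ?_⟩
  · have hsup : ⨆ ξ, |w ((g * h) • ξ) - w ξ| ≤ (wG g - 1) + (wG h - 1) := by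
      refine Real.iSup_le (fun ξ => ?_) (by linarith [hone g, hone h])
      calc |w ((g * h) • ξ) - w ξ| ≤ |w (g • h • ξ) - w (h • ξ)| + |w (h • ξ) - w ξ| := by
            rw [mul_smul]; exact abs_sub_le _ _ _
        _ ≤ (wG g - 1) + (wG h - 1) := add_le_add (habs g _) (habs h ξ)
    rw [hwG (g * h)]
    nlinarith [hone g, hone h]
  · refine rpow_le_rpow_mul_rpow_abs κ (by linarith [hw ξ]) (by linarith [hw (g • ξ)]) (hone g)
      (le_mul_of_abs_sub_le (hw _) (hone g) ?_) (le_mul_of_abs_sub_le (hw _) (hone g) (habs g ξ))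
    rw [abs_sub_comm]
    exact habs g ξ

def snormAt (w : Ξ → ℝ) (b : G → Ξ → ℂ) (κ : ℝ) (θ : G) : ℝ :=
  ⨆ ξ : Ξ, w ξ ^ (-κ) * ‖b θ ξ‖

/-- A bound for `⟨ξ⟩^{-(κa+κb)} |(a ∘ b)_θ(ξ)|` uniform in `ξ`, from estimating each term of
the series separately; the factor `⟨h⟩^{|κa|}` pays for evaluating `a` at `h ▷ ξ` rather
than at `ξ`. -/
def compMajorant [Group G] (w : Ξ → ℝ) (wG : G → ℝ) (a b : G → Ξ → ℂ) (κa κb : ℝ) (θ : G) : ℝ :=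
  ∑' h, snormAt w a κa (θ * h⁻¹) * (wG h ^ |κa| * snormAt w b κb h)

lemma snorm_eq_tsum_snormAt (w : Ξ → ℝ) (wG : G → ℝ) (b : G → Ξ → ℂ) (κ l : ℝ) :
    snorm w wG b κ l = ∑' θ, wG θ ^ l * snormAt w b κ θ := rfl

lemma snormAt_neg (w : Ξ → ℝ) (b : G → Ξ → ℂ) (κ : ℝ) : snormAt w (-b) κ = snormAt w b κ := by
  funext θ
  simp only [snormAt, Pi.neg_apply, norm_neg]

lemma snorm_neg (w : Ξ → ℝ) (wG : G → ℝ) (b : G → Ξ → ℂ) (κ l : ℝ) :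
    snorm w wG (-b) κ l = snorm w wG b κ l := by
  simp only [snorm_eq_tsum_snormAt, snormAt_neg]

lemma HasOrder.neg {w : Ξ → ℝ} {wG : G → ℝ} {b : G → Ξ → ℂ} {κ : ℝ} (hb : HasOrder w wG b κ) :
    HasOrder w wG (-b) κ := by
  simpa only [HasOrder, Pi.neg_apply, norm_neg] using hb

lemma summable_weighted_snormAt_add {w : Ξ → ℝ} {wG : G → ℝ} {x y : G → Ξ → ℂ} {κx κy l : ℝ}
    (hx : HasOrder w wG x κx) (hy : HasOrder w wG y κy) (hl : 0 ≤ l) :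
    Summable fun θ => wG θ ^ l * (snormAt w x κx θ + snormAt w y κy θ) := by
  simp only [mul_add]
  exact (hx.2 l hl).add (hy.2 l hl)

lemma norm_adSymb_le [Group G] [MulAction G Ξ] (a b : G → Ξ → ℂ) (θ : G) (ξ : Ξ) :
    ‖adSymb a b θ ξ‖ ≤ ‖compSymb a b θ ξ‖ + ‖compSymb b a θ ξ‖ := by
  rw [adSymb, norm_mul, Complex.norm_I, one_mul]
  exact norm_sub_le _ _

namespace SymbolWeights

variable [Group G] [MulAction G Ξ] {w : Ξ → ℝ} {wG : G → ℝ} (hW : SymbolWeights w wG)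
include hW

lemma pos (ξ : Ξ) : 0 < w ξ := zero_lt_one.trans_le (hW.one_le ξ)

lemma group_pos (g : G) : 0 < wG g := zero_lt_one.trans_le (hW.one_le_group g)

lemma snormAt_nonneg (b : G → Ξ → ℂ) (κ : ℝ) (θ : G) : 0 ≤ snormAt w b κ θ :=
  Real.iSup_nonneg fun ξ => mul_nonneg (Real.rpow_nonneg (hW.pos ξ).le _) (norm_nonneg _)

lemma weighted_snormAt_nonneg (b : G → Ξ → ℂ) (κ l : ℝ) (θ : G) :
    0 ≤ wG θ ^ l * snormAt w b κ θ :=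
  mul_nonneg (Real.rpow_nonneg (hW.group_pos θ).le _) (hW.snormAt_nonneg b κ θ)

lemma snorm_nonneg (b : G → Ξ → ℂ) (κ l : ℝ) : 0 ≤ snorm w wG b κ l :=
  tsum_nonneg (hW.weighted_snormAt_nonneg b κ l)

lemma snorm_mono_index {b : G → Ξ → ℂ} {κ l₁ l₂ : ℝ} (hb : HasOrder w wG b κ) (hl₁ : 0 ≤ l₁)
    (h : l₁ ≤ l₂) : snorm w wG b κ l₁ ≤ snorm w wG b κ l₂ :=
  Summable.tsum_le_tsum (fun θ => mul_le_mul_of_nonneg_right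
      (Real.rpow_le_rpow_of_exponent_le (hW.one_le_group θ) h) (hW.snormAt_nonneg b κ θ))
    (hb.2 l₁ hl₁) (hb.2 l₂ (hl₁.trans h))

lemma rpow_neg_mul_norm_le_snormAt {b : G → Ξ → ℂ} {κ o : ℝ} (hb : HasOrder w wG b κ)
    (h : κ ≤ o) (θ : G) (ξ : Ξ) : w ξ ^ (-o) * ‖b θ ξ‖ ≤ snormAt w b κ θ :=
  (mul_le_mul_of_nonneg_right (Real.rpow_le_rpow_of_exponent_le (hW.one_le ξ) (neg_le_neg h))
    (norm_nonneg _)).trans (le_ciSup (hb.1 θ) ξ)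

section Majorant

variable {c : G → Ξ → ℂ} {o : ℝ} {C : G → ℝ} (hC₀ : 0 ≤ C)
  (hC : ∀ θ ξ, w ξ ^ (-o) * ‖c θ ξ‖ ≤ C θ)
include hC₀ hC

lemma weighted_snormAt_le (l : ℝ) (θ : G) : wG θ ^ l * snormAt w c o θ ≤ wG θ ^ l * C θ :=
  mul_le_mul_of_nonneg_left (Real.iSup_le (hC θ) (hC₀ θ))
    (Real.rpow_nonneg (hW.group_pos θ).le _)

lemma hasOrder_of_le (hsum : ∀ l : ℝ, 0 ≤ l → Summable fun θ => wG θ ^ l * C θ) :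
    HasOrder w wG c o :=
  ⟨fun θ => ⟨C θ, by rintro _ ⟨ξ, rfl⟩; exact hC θ ξ⟩, fun l hl =>
    (hsum l hl).of_nonneg_of_le (hW.weighted_snormAt_nonneg c o l)
      (hW.weighted_snormAt_le hC₀ hC l)⟩

lemma snorm_le_of_le {l : ℝ} (hsum : Summable fun θ => wG θ ^ l * C θ) :
    snorm w wG c o l ≤ ∑' θ, wG θ ^ l * C θ :=
  Summable.tsum_le_tsum (hW.weighted_snormAt_le hC₀ hC l)
    (hsum.of_nonneg_of_le (hW.weighted_snormAt_nonneg c o l) (hW.weighted_snormAt_le hC₀ hC l))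
    hsum

end Majorant

lemma hasOrder_mono {b : G → Ξ → ℂ} {κ o : ℝ} (hb : HasOrder w wG b κ) (h : κ ≤ o) :
    HasOrder w wG b o ∧ ∀ l, 0 ≤ l → snorm w wG b o l ≤ snorm w wG b κ l :=
  ⟨hW.hasOrder_of_le (hW.snormAt_nonneg b κ) (hW.rpow_neg_mul_norm_le_snormAt hb h) hb.2,
    fun l hl => hW.snorm_le_of_le (hW.snormAt_nonneg b κ)
      (hW.rpow_neg_mul_norm_le_snormAt hb h) (hb.2 l hl)⟩

section Sum

variable {c x y : G → Ξ → ℂ} {o κx κy : ℝ} (hx : HasOrder w wG x κx) (hy : HasOrder w wG y κy)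
  (hxo : κx ≤ o) (hyo : κy ≤ o) (hc : ∀ θ ξ, ‖c θ ξ‖ ≤ ‖x θ ξ‖ + ‖y θ ξ‖)
include hx hy hxo hyo hc

lemma rpow_neg_mul_norm_le_snormAt_add (θ : G) (ξ : Ξ) :
    w ξ ^ (-o) * ‖c θ ξ‖ ≤ snormAt w x κx θ + snormAt w y κy θ :=
  calc w ξ ^ (-o) * ‖c θ ξ‖ ≤ w ξ ^ (-o) * ‖x θ ξ‖ + w ξ ^ (-o) * ‖y θ ξ‖ := by
        rw [← mul_add]
        exact mul_le_mul_of_nonneg_left (hc θ ξ) (Real.rpow_nonneg (hW.pos ξ).le _)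
    _ ≤ snormAt w x κx θ + snormAt w y κy θ :=
        add_le_add (hW.rpow_neg_mul_norm_le_snormAt hx hxo θ ξ)
          (hW.rpow_neg_mul_norm_le_snormAt hy hyo θ ξ)

lemma hasOrder_of_norm_le_add : HasOrder w wG c o :=
  hW.hasOrder_of_le (fun θ => add_nonneg (hW.snormAt_nonneg x κx θ) (hW.snormAt_nonneg y κy θ))
    (hW.rpow_neg_mul_norm_le_snormAt_add hx hy hxo hyo hc)
    fun _ hl => summable_weighted_snormAt_add hx hy hl

lemma snorm_le_add_of_norm_le_add {l : ℝ} (hl : 0 ≤ l) :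
    snorm w wG c o l ≤ snorm w wG x κx l + snorm w wG y κy l := by
  refine (hW.snorm_le_of_le
    (fun θ => add_nonneg (hW.snormAt_nonneg x κx θ) (hW.snormAt_nonneg y κy θ))
    (hW.rpow_neg_mul_norm_le_snormAt_add hx hy hxo hyo hc)
    (summable_weighted_snormAt_add hx hy hl)).trans_eq ?_
  simp only [mul_add]
  exact (hx.2 l hl).tsum_add (hy.2 l hl)

end Sum

lemma compMajorant_nonneg (a b : G → Ξ → ℂ) {κa κb : ℝ} (θ : G) :
    0 ≤ compMajorant w wG a b κa κb θ :=
  tsum_nonneg fun h => mul_nonneg (hW.snormAt_nonneg a κa _) (hW.weighted_snormAt_nonneg b κb _ h)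

section Composition

variable {a b : G → Ξ → ℂ} {κa κb : ℝ} (ha : HasOrder w wG a κa) (hb : HasOrder w wG b κb)
include ha hb

lemma rpow_neg_mul_norm_mul_le (θ h : G) (ξ : Ξ) :
    w ξ ^ (-(κa + κb)) * ‖a (θ * h⁻¹) (h • ξ) * b h ξ‖ ≤
      snormAt w a κa (θ * h⁻¹) * (wG h ^ |κa| * snormAt w b κb h) := by
  have hsplit : w ξ ^ (-(κa + κb)) = w ξ ^ (-κa) * w ξ ^ (-κb) := by
    rw [← Real.rpow_add (hW.pos ξ), neg_add]
  have hshift : w ξ ^ (-κa) ≤ w (h • ξ) ^ (-κa) * wG h ^ |κa| := by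
    simpa only [abs_neg] using hW.rpow_le h ξ (-κa)
  have hw₀ := fun ξ => (hW.pos ξ).le
  calc w ξ ^ (-(κa + κb)) * ‖a (θ * h⁻¹) (h • ξ) * b h ξ‖
      = w ξ ^ (-κa) * ‖a (θ * h⁻¹) (h • ξ)‖ * (w ξ ^ (-κb) * ‖b h ξ‖) := by
        rw [hsplit, norm_mul]; ring
    _ ≤ w (h • ξ) ^ (-κa) * wG h ^ |κa| * ‖a (θ * h⁻¹) (h • ξ)‖ * (w ξ ^ (-κb) * ‖b h ξ‖) := by
        gcongr
        exact mul_nonneg (Real.rpow_nonneg (hw₀ ξ) _) (norm_nonneg _)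
    _ = w (h • ξ) ^ (-κa) * ‖a (θ * h⁻¹) (h • ξ)‖ * (wG h ^ |κa| * (w ξ ^ (-κb) * ‖b h ξ‖)) := by
        ring
    _ ≤ snormAt w a κa (θ * h⁻¹) * (wG h ^ |κa| * snormAt w b κb h) := by
        have hwG₀ : 0 ≤ wG h ^ |κa| := Real.rpow_nonneg (hW.group_pos h).le _
        refine mul_le_mul (le_ciSup (ha.1 _) (h • ξ))
          (mul_le_mul_of_nonneg_left (le_ciSup (hb.1 h) ξ) hwG₀) ?_ (hW.snormAt_nonneg a κa _)
        exact mul_nonneg hwG₀ (mul_nonneg (Real.rpow_nonneg (hw₀ ξ) _) (norm_nonneg _))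

lemma summable_compMajorant_terms (θ : G) :
    Summable fun h => snormAt w a κa (θ * h⁻¹) * (wG h ^ |κa| * snormAt w b κb h) := by
  have hA : Summable (snormAt w a κa) := by
    have h₀ := ha.2 0 le_rfl
    simp only [Real.rpow_zero, one_mul] at h₀
    exact h₀
  exact summable_mul_inv_mul hA (hb.2 _ (abs_nonneg κa)) (hW.snormAt_nonneg a κa)
    (hW.weighted_snormAt_nonneg b κb _) θ

lemma rpow_neg_mul_norm_compSymb_le (θ : G) (ξ : Ξ) :
    w ξ ^ (-(κa + κb)) * ‖compSymb a b θ ξ‖ ≤ compMajorant w wG a b κa κb θ := by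
  have hw : 0 < w ξ ^ (-(κa + κb)) := Real.rpow_pos_of_pos (hW.pos ξ) _
  have hsum : Summable fun h => w ξ ^ (-(κa + κb)) * ‖a (θ * h⁻¹) (h • ξ) * b h ξ‖ :=
    (hW.summable_compMajorant_terms ha hb θ).of_nonneg_of_le
      (fun h => mul_nonneg hw.le (norm_nonneg _)) (hW.rpow_neg_mul_norm_mul_le ha hb θ · ξ)
  calc w ξ ^ (-(κa + κb)) * ‖compSymb a b θ ξ‖
      ≤ w ξ ^ (-(κa + κb)) * ∑' h, ‖a (θ * h⁻¹) (h • ξ) * b h ξ‖ :=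
        mul_le_mul_of_nonneg_left
          (norm_tsum_le_tsum_norm ((summable_mul_left_iff hw.ne').1 hsum)) hw.le
    _ = ∑' h, w ξ ^ (-(κa + κb)) * ‖a (θ * h⁻¹) (h • ξ) * b h ξ‖ := tsum_mul_left.symm
    _ ≤ _ := hsum.tsum_le_tsum (hW.rpow_neg_mul_norm_mul_le ha hb θ · ξ)
        (hW.summable_compMajorant_terms ha hb θ)

/-- Submultiplicativity of `wG` moves the weight `⟨θ⟩^l` onto the two factors. -/
lemma weighted_compMajorant_le {l : ℝ} (hl : 0 ≤ l) (θ : G) :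
    wG θ ^ l * compMajorant w wG a b κa κb θ ≤
      ∑' h, wG (θ * h⁻¹) ^ l * snormAt w a κa (θ * h⁻¹) *
        (wG h ^ (l + |κa|) * snormAt w b κb h) := by
  rw [compMajorant, ← tsum_mul_left]
  refine Summable.tsum_le_tsum (fun h => ?_) ((hW.summable_compMajorant_terms ha hb θ).mul_left _)
    (summable_mul_inv_mul (ha.2 l hl) (hb.2 _ (add_nonneg hl (abs_nonneg κa)))
      (hW.weighted_snormAt_nonneg a κa l) (hW.weighted_snormAt_nonneg b κb _) θ)
  have hwG : wG θ ^ l ≤ wG (θ * h⁻¹) ^ l * wG h ^ l := by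
    rw [← Real.mul_rpow (hW.group_pos _).le (hW.group_pos _).le]
    refine Real.rpow_le_rpow (hW.group_pos θ).le ?_ hl
    simpa only [inv_mul_cancel_right] using hW.map_mul_le (θ * h⁻¹) h
  calc wG θ ^ l * (snormAt w a κa (θ * h⁻¹) * (wG h ^ |κa| * snormAt w b κb h))
      ≤ wG (θ * h⁻¹) ^ l * wG h ^ l *
          (snormAt w a κa (θ * h⁻¹) * (wG h ^ |κa| * snormAt w b κb h)) :=
        mul_le_mul_of_nonneg_right hwG (mul_nonneg (hW.snormAt_nonneg a κa _)
          (hW.weighted_snormAt_nonneg b κb _ h))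
    _ = _ := by rw [Real.rpow_add (hW.group_pos h)]; ring

lemma hasSum_weighted_snormAt_conv {l : ℝ} (hl : 0 ≤ l) :
    HasSum (fun θ => ∑' h, wG (θ * h⁻¹) ^ l * snormAt w a κa (θ * h⁻¹) *
        (wG h ^ (l + |κa|) * snormAt w b κb h))
      (snorm w wG a κa l * snorm w wG b κb (l + |κa|)) :=
  hasSum_tsum_mul_inv_mul (f := fun g => wG g ^ l * snormAt w a κa g)
    (g := fun h => wG h ^ (l + |κa|) * snormAt w b κb h)
    (ha.2 l hl) (hb.2 _ (add_nonneg hl (abs_nonneg κa)))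
    (hW.weighted_snormAt_nonneg a κa l) (hW.weighted_snormAt_nonneg b κb _)

lemma summable_weighted_compMajorant {l : ℝ} (hl : 0 ≤ l) :
    Summable fun θ => wG θ ^ l * compMajorant w wG a b κa κb θ :=
  (hW.hasSum_weighted_snormAt_conv ha hb hl).summable.of_nonneg_of_le
    (fun θ => mul_nonneg (Real.rpow_nonneg (hW.group_pos θ).le _) (hW.compMajorant_nonneg a b θ))
    (hW.weighted_compMajorant_le ha hb hl)

lemma hasOrder_compSymb : HasOrder w wG (compSymb a b) (κa + κb) :=
  hW.hasOrder_of_le (hW.compMajorant_nonneg a b)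
    (hW.rpow_neg_mul_norm_compSymb_le ha hb) fun _ hl => hW.summable_weighted_compMajorant ha hb hl

lemma snorm_compSymb_le {l : ℝ} (hl : 0 ≤ l) :
    snorm w wG (compSymb a b) (κa + κb) l ≤ snorm w wG a κa l * snorm w wG b κb (l + |κa|) :=
  (hW.snorm_le_of_le (hW.compMajorant_nonneg a b)
    (hW.rpow_neg_mul_norm_compSymb_le ha hb) (hW.summable_weighted_compMajorant ha hb hl)).trans
    ((hW.summable_weighted_compMajorant ha hb hl).tsum_le_tsum
      (hW.weighted_compMajorant_le ha hb hl) (hW.hasSum_weighted_snormAt_conv ha hb hl).summable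
      |>.trans (hW.hasSum_weighted_snormAt_conv ha hb hl).tsum_eq.le)

end Composition

section Commutator

variable {a b : G → Ξ → ℂ} {κa κb κb' o : ℝ} (ha : HasOrder w wG a κa)
  (hb : HasOrder w wG b κb) (hb' : HasOrder w wG b κb') (h₁ : κa + κb ≤ o) (h₂ : κb' + κa ≤ o)
include ha hb hb' h₁ h₂

lemma hasOrder_adSymb : HasOrder w wG (adSymb a b) o :=
  hW.hasOrder_of_norm_le_add (hW.hasOrder_compSymb ha hb) (hW.hasOrder_compSymb hb' ha) h₁ h₂
    (norm_adSymb_le a b)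

lemma snorm_adSymb_le {l : ℝ} (hl : 0 ≤ l) :
    snorm w wG (adSymb a b) o l ≤
      snorm w wG a κa l * snorm w wG b κb (l + |κa|) +
        snorm w wG b κb' l * snorm w wG a κa (l + |κb'|) :=
  (hW.snorm_le_add_of_norm_le_add (hW.hasOrder_compSymb ha hb) (hW.hasOrder_compSymb hb' ha) h₁ h₂
    (norm_adSymb_le a b) hl).trans
    (add_le_add (hW.snorm_compSymb_le ha hb hl) (hW.snorm_compSymb_le hb' ha hl))

end Commutator

section Gauge

variable {aNR ψ : G → Ξ → ℂ} {γ δ s : ℝ} (hs : 0 < s) (hNR : HasOrder w wG aNR γ)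
  (hψNR : ∀ l : ℝ, 0 ≤ l → snorm w wG ψ (γ - δ) l ≤ s⁻¹ * snorm w wG aNR γ l)
include hs hNR hψNR

lemma snorm_gauge_le {l L : ℝ} (hl : 0 ≤ l) (hlL : l ≤ L) :
    snorm w wG ψ (γ - δ) l ≤ s⁻¹ * snorm w wG aNR γ L :=
  (hψNR l hl).trans
    (mul_le_mul_of_nonneg_left (hW.snorm_mono_index hNR hl hlL) (inv_nonneg.2 hs.le))

variable (hψ : HasOrder w wG ψ (γ - δ))
include hψ

lemma snorm_adSymb_gauge_le_of_order {b : G → Ξ → ℂ} {β l : ℝ} (hb : HasOrder w wG b β)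
    (hl : 0 ≤ l) :
    snorm w wG (adSymb b ψ) (β + γ - δ) l ≤
      2 / s * snorm w wG aNR γ (l + |β| + |γ - δ|) * snorm w wG b β (l + |γ - δ|) := by
  set N := snorm w wG aNR γ (l + |β| + |γ - δ|)
  have hb_mono : snorm w wG b β l ≤ snorm w wG b β (l + |γ - δ|) :=
    hW.snorm_mono_index hb hl (le_add_of_nonneg_right (abs_nonneg _))
  have hψ₁ : snorm w wG ψ (γ - δ) (l + |β|) ≤ s⁻¹ * N :=
    hW.snorm_gauge_le hs hNR hψNR (by positivity) (le_add_of_nonneg_right (abs_nonneg _))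
  have hψ₂ : snorm w wG ψ (γ - δ) l ≤ s⁻¹ * N :=
    hW.snorm_gauge_le hs hNR hψNR hl (by linarith [abs_nonneg β, abs_nonneg (γ - δ)])
  calc snorm w wG (adSymb b ψ) (β + γ - δ) l
      ≤ snorm w wG b β l * snorm w wG ψ (γ - δ) (l + |β|) +
          snorm w wG ψ (γ - δ) l * snorm w wG b β (l + |γ - δ|) :=
        hW.snorm_adSymb_le hb hψ hψ (by linarith) (by linarith) hl
    _ ≤ snorm w wG b β (l + |γ - δ|) * (s⁻¹ * N) + s⁻¹ * N * snorm w wG b β (l + |γ - δ|) := by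
        gcongr <;> exact hW.snorm_nonneg _ _ _
    _ = 2 / s * N * snorm w wG b β (l + |γ - δ|) := by ring

lemma snorm_adSymb_gauge_le {X : G → Ξ → ℂ} {κ l L : ℝ} (hγδ : γ ≤ δ) (hX : HasOrder w wG X κ)
    (hl : 0 ≤ l) (hlL : l + |κ| ≤ L) :
    snorm w wG (adSymb X ψ) κ l ≤ 2 / s * snorm w wG aNR γ L * snorm w wG X κ l := by
  obtain ⟨hψ₀, hψ₀_le⟩ := hW.hasOrder_mono hψ (by linarith : γ - δ ≤ 0)
  set N := snorm w wG aNR γ L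
  have hψ₁ : snorm w wG ψ (γ - δ) (l + |κ|) ≤ s⁻¹ * N :=
    hW.snorm_gauge_le hs hNR hψNR (by positivity) hlL
  have hψ₂ : snorm w wG ψ 0 l ≤ s⁻¹ * N :=
    (hψ₀_le l hl).trans (hW.snorm_gauge_le hs hNR hψNR hl (by linarith [abs_nonneg κ]))
  calc snorm w wG (adSymb X ψ) κ l
      ≤ snorm w wG X κ l * snorm w wG ψ (γ - δ) (l + |κ|) +
          snorm w wG ψ 0 l * snorm w wG X κ (l + |(0 : ℝ)|) :=
        hW.snorm_adSymb_le hX hψ hψ₀ (by linarith) (by linarith) hl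
    _ ≤ snorm w wG X κ l * (s⁻¹ * N) + s⁻¹ * N * snorm w wG X κ l := by
        rw [abs_zero, add_zero]
        gcongr <;> exact hW.snorm_nonneg _ _ _
    _ = 2 / s * N * snorm w wG X κ l := by ring

lemma snorm_iterate_adSymb_gauge_le {β : ℝ} {B : G → Ξ → ℂ} (hγδ : γ ≤ δ)
    (hB : HasOrder w wG B β) (n : ℕ) :
    HasOrder w wG ((fun t => adSymb t ψ)^[n + 1] B) (β + γ - δ) ∧
      ∀ l : ℝ, 0 ≤ l → snorm w wG ((fun t => adSymb t ψ)^[n + 1] B) (β + γ - δ) l ≤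
        (2 / s * snorm w wG aNR γ (l + |β| + |γ - δ|)) ^ (n + 1) *
          snorm w wG B β (l + |γ - δ|) := by
  induction n with
  | zero =>
    rw [zero_add, Function.iterate_one]
    refine ⟨hW.hasOrder_adSymb hB hψ hψ (by linarith) (by linarith), fun l hl => ?_⟩
    simpa only [pow_one] using hW.snorm_adSymb_gauge_le_of_order hs hNR hψNR hψ hB hl
  | succ n ih =>
    rw [Function.iterate_succ_apply']
    refine ⟨hW.hasOrder_adSymb ih.1 hψ hψ (by linarith) (by linarith), fun l hl => ?_⟩
    have habs : l + |β + γ - δ| ≤ l + |β| + |γ - δ| := by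
      have h := abs_add_le β (γ - δ)
      rw [← add_sub_assoc] at h
      linarith
    have hN := hW.snorm_nonneg aNR γ (l + |β| + |γ - δ|)
    refine (hW.snorm_adSymb_gauge_le hs hNR hψNR hψ hγδ ih.1 hl habs).trans ?_
    exact (mul_le_mul_of_nonneg_left (ih.2 l hl) (mul_nonneg (by positivity) hN)).trans_eq
      (by ring)

end Gauge

end SymbolWeights

theorem stmt13_general [Group G] [MulAction G Ξ]
    (w : Ξ → ℝ) (hw : ∀ ξ, 1 ≤ w ξ)
    (wG : G → ℝ) (hwG : ∀ g : G, wG g = 1 + ⨆ ξ : Ξ, |w (g • ξ) - w ξ|)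
    (hbdd : ∀ g : G, BddAbove (Set.range fun ξ : Ξ => |w (g • ξ) - w ξ|))
    (aNR ψ : G → Ξ → ℂ)
    (β γ δ s : ℝ) (hs : 0 < s) (hδγ : γ < δ)
    (dsym : G → Ξ → ℂ)
    (hcomm : ∀ (θ : G) (ξ : Ξ), adSymb dsym ψ θ ξ + aNR θ ξ = 0)
    (hordNRγ : HasOrder w wG aNR γ) (hordNRβ : HasOrder w wG aNR β)
    (hordψ : HasOrder w wG ψ (γ - δ))
    (hψ : ∀ l : ℝ, 0 ≤ l → snorm w wG ψ (γ - δ) l ≤ s⁻¹ * snorm w wG aNR γ l) :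
    ∀ k : ℕ, 2 ≤ k → ∀ l : ℝ, 0 ≤ l →
      snorm w wG ((fun t => adSymb t ψ)^[k] dsym) (β + γ - δ) l ≤
        (2 / s * snorm w wG aNR γ (l + |β| + |γ - δ|)) ^ (k - 1) *
          snorm w wG aNR β (l + |γ - δ|) := by
  have hW := symbolWeights_of_eq_one_add_iSup hw hwG hbdd
  have hB₁ : (fun t => adSymb t ψ)^[1] dsym = -aNR := by
    funext θ ξ
    exact eq_neg_of_add_eq_zero_left (hcomm θ ξ)
  intro k hk l hl
  obtain ⟨n, rfl⟩ : ∃ n, k = n + 1 + 1 := ⟨k - 2, by omega⟩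
  rw [Function.iterate_add_apply, hB₁, Nat.add_sub_cancel, ← snorm_neg w wG aNR β]
  exact (hW.snorm_iterate_adSymb_gauge_le hs hordNRγ hψ hordψ hδγ.le hordNRβ.neg n).2 l hl

/-- if the commutator equation `ad(A^D;Ψ) + A^{NR} = 0` holds, with
`A^{NR}` of order `γ` (and of order `β ≥ γ`), `Ψ` of order `γ − δ` with `δ > γ`, and
`⦀Ψ⦀_l^{(γ−δ)} ≤ s⁻¹ ⦀A^{NR}⦀_l^{(γ)}` for all `l ≥ 0`, then for all `k ≥ 2`,
`⦀ad^k(A^D;Ψ)⦀_l^{(β+γ−δ)} ≤ ((2/s)⦀A^{NR}⦀_{l+|β|+|γ−δ|}^{(γ)})^{k−1} ⦀A^{NR}⦀_{l+|γ−δ|}^{(β)}`. -/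
theorem stmt13 [Nonempty Ξ] [Group G] [MulAction G Ξ]
    (w : Ξ → ℝ) (hw : ∀ ξ, 1 ≤ w ξ)
    (wG : G → ℝ) (hwG : ∀ g : G, wG g = 1 + ⨆ ξ : Ξ, |w (g • ξ) - w ξ|)
    (hbdd : ∀ g : G, BddAbove (Set.range fun ξ : Ξ => |w (g • ξ) - w ξ|))
    (hfree : ∀ (g : G) (ξ : Ξ), g • ξ = ξ → g = 1)
    (aD : Ξ → ℂ) (aNR ψ : G → Ξ → ℂ)
    (β γ δ s : ℝ) (hs : 0 < s) (hγβ : γ ≤ β) (hδγ : γ < δ)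
    (dsym : G → Ξ → ℂ) (hds : ∀ (θ : G) (ξ : Ξ), dsym θ ξ = if θ = 1 then aD ξ else 0)
    (hcomm : ∀ (θ : G) (ξ : Ξ), adSymb dsym ψ θ ξ + aNR θ ξ = 0)
    (hordNRγ : HasOrder w wG aNR γ) (hordNRβ : HasOrder w wG aNR β)
    (hordψ : HasOrder w wG ψ (γ - δ))
    (hψ : ∀ l : ℝ, 0 ≤ l → snorm w wG ψ (γ - δ) l ≤ s⁻¹ * snorm w wG aNR γ l) :
    ∀ k : ℕ, 2 ≤ k → ∀ l : ℝ, 0 ≤ l →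
      snorm w wG ((fun t => adSymb t ψ)^[k] dsym) (β + γ - δ) l ≤
        (2 / s * snorm w wG aNR γ (l + |β| + |γ - δ|)) ^ (k - 1) *
          snorm w wG aNR β (l + |γ - δ|) :=
  stmt13_general w hw wG hwG hbdd aNR ψ β γ δ s hs hδγ dsym hcomm hordNRγ hordNRβ hordψ hψ
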